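/- Let $(A,L)$ and $(A',L')$ be Lie-Rinehart algebras over $R$. Then the $R$-module $L\otimes A'\oplus A\otimes L'$ carries a natural $(R,A\otimes A')$-Lie algebra structure, with $A\otimes A'$-module structure given componentwise, bracket $[(\alpha\otimes a', a\otimes \alpha'),(\beta\otimes b', b\otimes\beta')]$ determined by the brackets and anchors of $L$ and $L'$, and anchor acting on $A\otimes A'$ via $(\alpha\otimes a')(b\otimes b') = \alpha(b)\otimes a'b'$ and $(a\otimes\alpha')(b\otimes b') = ab\otimes \alpha'(b')$. -/

import Mathlib

open TensorProduct

universe u v w x y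

section LRdefs

variable (R : Type u) [CommRing R]

/-- `φ : A → A'` is (the function underlying) a morphism of `R`-algebras. -/
def IsAlgHomFun {A : Type v} {A' : Type w} [CommRing A] [Algebra R A] [Ring A']
    [Algebra R A'] (φ : A → A') : Prop :=
  IsLinearMap R φ ∧ φ 1 = 1 ∧ ∀ a b : A, φ (a * b) = φ a * φ b

/-- `(A, L)`, with `A`-action `sm` on `L`, bracket `br` and anchor `an`, is a
Lie-Rinehart algebra over `R` (an `(R,A)`-Lie algebra structure on `L`). -/
def IsLR (A : Type v) [CommRing A] [Algebra R A]
    (L : Type w) [AddCommGroup L] [Module R L]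
    (sm : A → L → L) (br : L → L → L) (an : L → A → A) : Prop :=
  (∀ a : A, IsLinearMap R (sm a)) ∧
  (∀ x : L, sm 1 x = x) ∧
  (∀ (a b : A) (x : L), sm (a * b) x = sm a (sm b x)) ∧
  (∀ (a b : A) (x : L), sm (a + b) x = sm a x + sm b x) ∧
  (∀ (r : R) (a : A) (x : L), sm (r • a) x = r • sm a x) ∧
  (∀ x : L, IsLinearMap R (br x)) ∧
  (∀ y : L, IsLinearMap R fun x : L => br x y) ∧
  (∀ x : L, br x x = 0) ∧
  (∀ x y z : L, br x (br y z) = br (br x y) z + br y (br x z)) ∧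
  (∀ x : L, IsLinearMap R (an x)) ∧
  (∀ a : A, IsLinearMap R fun x : L => an x a) ∧
  (∀ (x : L) (a b : A), an x (a * b) = an x a * b + a * an x b) ∧
  (∀ (x y : L) (a : A), an (br x y) a = an x (an y a) - an y (an x a)) ∧
  (∀ (a : A) (x : L) (b : A), an (sm a x) b = a * an x b) ∧
  (∀ (x : L) (a : A) (y : L), br x (sm a y) = sm a (br x y) + sm (an x a) y)

/-- `(φ, ψ)` is a morphism of Lie-Rinehart algebras. -/
def IsLRHom {A : Type v} [CommRing A] [Algebra R A] {L : Type w} [AddCommGroup L]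
    [Module R L] {A' : Type x} [CommRing A'] [Algebra R A'] {L' : Type y}
    [AddCommGroup L'] [Module R L']
    (sm : A → L → L) (br : L → L → L) (an : L → A → A)
    (sm' : A' → L' → L') (br' : L' → L' → L') (an' : L' → A' → A')
    (φ : A → A') (ψ : L → L') : Prop :=
  IsAlgHomFun R φ ∧ IsLinearMap R ψ ∧
  (∀ x y : L, ψ (br x y) = br' (ψ x) (ψ y)) ∧
  (∀ (a : A) (x : L), ψ (sm a x) = sm' (φ a) (ψ x)) ∧
  (∀ (x : L) (a : A), φ (an x a) = an' (ψ x) (φ a))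

/-- `(U, ιA, ιL)` is the universal algebra of the Lie-Rinehart algebra
`(A, L, sm, br, an)`: it satisfies the generating relations and is universal
among `R`-algebras equipped with such a pair of maps. -/
def IsUniversalLR (A : Type v) [CommRing A] [Algebra R A]
    (L : Type w) [AddCommGroup L] [Module R L]
    (sm : A → L → L) (br : L → L → L) (an : L → A → A)
    (U : Type x) [Ring U] [Algebra R U] (ιA : A → U) (ιL : L → U) : Prop :=
  IsAlgHomFun R ιA ∧ IsLinearMap R ιL ∧
  (∀ (a : A) (x : L), ιA a * ιL x = ιL (sm a x)) ∧
  (∀ x y : L, ιL (br x y) = ιL x * ιL y - ιL y * ιL x) ∧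
  (∀ (x : L) (a : A), ιL x * ιA a - ιA a * ιL x = ιA (an x a)) ∧
  ∀ (B : Type x) [Ring B] [Algebra R B] (φA : A → B) (φL : L → B),
    IsAlgHomFun R φA → IsLinearMap R φL →
    (∀ (a : A) (x : L), φA a * φL x = φL (sm a x)) →
    (∀ x y : L, φL (br x y) = φL x * φL y - φL y * φL x) →
    (∀ (x : L) (a : A), φL x * φA a - φA a * φL x = φA (an x a)) →
    ∃! f : U →ₐ[R] B, (∀ a : A, f (ιA a) = φA a) ∧ ∀ x : L, f (ιL x) = φL x

end LRdefs

/-! The structure maps are the bilinear extensions (`TensorProduct.map₂`) of their values on pure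
tensors. Each Lie–Rinehart identity for them is additive in every variable (for `[x, x] = 0`, pass
to skew-symmetry first), so it suffices to check it on the generators `(α ⊗ a', 0)`, `(0, a ⊗ α')`
of the module and `b ⊗ b'` of the algebra, where it reduces to the identities for `(A, L)` and
`(A', L')` and the commutativity of `A` and `A'`. The cross term
`[(α ⊗ a', 0), (0, b ⊗ β')] = (-(b • α ⊗ β'(a')), α(b) ⊗ a' • β')` is the one the Leibniz rule
forces once `(α ⊗ 1, 0)` and `(0, 1 ⊗ β')` commute. -/

namespace IsLR

variable {R : Type*} [CommRing R] {A : Type*} [CommRing A] [Algebra R A]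
  {L : Type*} [AddCommGroup L] [Module R L]
  {sm : A → L → L} {br : L → L → L} {an : L → A → A}

theorem sm_one (h : IsLR R A L sm br an) (x : L) : sm 1 x = x := h.2.1 x

theorem sm_mul (h : IsLR R A L sm br an) (a b : A) (x : L) : sm (a * b) x = sm a (sm b x) :=
  h.2.2.1 a b x

theorem br_self (h : IsLR R A L sm br an) (x : L) : br x x = 0 := h.2.2.2.2.2.2.2.1 x

theorem leibniz_br (h : IsLR R A L sm br an) (x y z : L) :
    br x (br y z) = br (br x y) z + br y (br x z) :=
  h.2.2.2.2.2.2.2.2.1 x y z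

theorem an_mul (h : IsLR R A L sm br an) (x : L) (a b : A) :
    an x (a * b) = an x a * b + a * an x b :=
  h.2.2.2.2.2.2.2.2.2.2.2.1 x a b

theorem an_br (h : IsLR R A L sm br an) (x y : L) (a : A) :
    an (br x y) a = an x (an y a) - an y (an x a) :=
  h.2.2.2.2.2.2.2.2.2.2.2.2.1 x y a

theorem an_sm (h : IsLR R A L sm br an) (a : A) (x : L) (b : A) : an (sm a x) b = a * an x b :=
  h.2.2.2.2.2.2.2.2.2.2.2.2.2.1 a x b

theorem br_sm (h : IsLR R A L sm br an) (x : L) (a : A) (y : L) :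
    br x (sm a y) = sm a (br x y) + sm (an x a) y :=
  h.2.2.2.2.2.2.2.2.2.2.2.2.2.2 x a y

def smₗ (h : IsLR R A L sm br an) : A →ₗ[R] L →ₗ[R] L :=
  LinearMap.mk₂ R sm h.2.2.2.1 h.2.2.2.2.1 (fun a => (h.1 a).map_add)
    (fun c a => (h.1 a).map_smul c)

def brₗ (h : IsLR R A L sm br an) : L →ₗ[R] L →ₗ[R] L :=
  LinearMap.mk₂ R br (fun x y z => (h.2.2.2.2.2.2.1 z).map_add x y)
    (fun c x y => (h.2.2.2.2.2.2.1 y).map_smul c x)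
    (fun x => (h.2.2.2.2.2.1 x).map_add) (fun c x => (h.2.2.2.2.2.1 x).map_smul c)

def anₗ (h : IsLR R A L sm br an) : L →ₗ[R] A →ₗ[R] A :=
  LinearMap.mk₂ R an (fun x y a => (h.2.2.2.2.2.2.2.2.2.2.1 a).map_add x y)
    (fun c x a => (h.2.2.2.2.2.2.2.2.2.2.1 a).map_smul c x)
    (fun x => (h.2.2.2.2.2.2.2.2.2.1 x).map_add) (fun c x => (h.2.2.2.2.2.2.2.2.2.1 x).map_smul c)

@[simp] theorem smₗ_apply (h : IsLR R A L sm br an) (a : A) (x : L) : h.smₗ a x = sm a x := rfl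

@[simp] theorem brₗ_apply (h : IsLR R A L sm br an) (x y : L) : h.brₗ x y = br x y := rfl

@[simp] theorem anₗ_apply (h : IsLR R A L sm br an) (x : L) (a : A) : h.anₗ x a = an x a := rfl

theorem sm_neg (h : IsLR R A L sm br an) (a : A) (x : L) : sm a (-x) = -sm a x :=
  map_neg (h.smₗ a) x

theorem br_skew (h : IsLR R A L sm br an) (x y : L) : br y x = -br x y := by
  have hxy := h.br_self (x + y)
  rw [← h.brₗ_apply] at hxy
  simp only [map_add, LinearMap.add_apply, brₗ_apply, h.br_self, zero_add, add_zero] at hxy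
  exact eq_neg_of_add_eq_zero_left hxy

theorem sm_br (h : IsLR R A L sm br an) (a : A) (x y : L) :
    br (sm a x) y = sm a (br x y) - sm (an y a) x := by
  rw [h.br_skew, h.br_sm, h.br_skew y x, h.sm_neg]
  abel

theorem an_one (h : IsLR R A L sm br an) (x : L) : an x 1 = 0 := by
  simpa using h.an_mul x 1 1

end IsLR

theorem TensorProduct.prod_induction_on {R M N M' N' : Type*} [CommRing R]
    [AddCommGroup M] [Module R M] [AddCommGroup N] [Module R N]
    [AddCommGroup M'] [Module R M'] [AddCommGroup N'] [Module R N']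
    {C : (M ⊗[R] N) × (M' ⊗[R] N') → Prop} (x : (M ⊗[R] N) × (M' ⊗[R] N'))
    (inl : ∀ m n, C (m ⊗ₜ n, 0)) (inr : ∀ m' n', C (0, m' ⊗ₜ n'))
    (add : ∀ x y, C x → C y → C (x + y)) : C x := by
  have zero : C 0 := by simpa [Prod.mk_zero_zero] using inl 0 0
  obtain ⟨u, v⟩ := x
  rw [← add_zero u, ← zero_add v, ← Prod.mk_add_mk]
  refine add _ _ ?_ ?_
  · induction u using TensorProduct.induction_on with
    | zero => exact zero
    | tmul m n => exact inl m n
    | add u₁ u₂ h₁ h₂ => simpa using add _ _ h₁ h₂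
  · induction v using TensorProduct.induction_on with
    | zero => exact zero
    | tmul m' n' => exact inr m' n'
    | add v₁ v₂ h₁ h₂ => simpa using add _ _ h₁ h₂

namespace IsLR

open LinearMap (mul)

variable {R : Type*} [CommRing R]
  {A : Type*} [CommRing A] [Algebra R A] {L : Type*} [AddCommGroup L] [Module R L]
  {A' : Type*} [CommRing A'] [Algebra R A'] {L' : Type*} [AddCommGroup L'] [Module R L']
  {sm : A → L → L} {br : L → L → L} {an : L → A → A}
  {sm' : A' → L' → L'} {br' : L' → L' → L'} {an' : L' → A' → A'}
  (h : IsLR R A L sm br an) (h' : IsLR R A' L' sm' br' an')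

local notation "P" => (L ⊗[R] A') × (A ⊗[R] L')

noncomputable def tensorSmul : A ⊗[R] A' →ₗ[R] P →ₗ[R] P :=
  LinearMap.mk₂ R
    (fun t x => (map₂ h.smₗ (mul R A') t x.1, map₂ (mul R A) h'.smₗ t x.2))
    (by simp) (by simp) (by simp) (by simp)

noncomputable def tensorBracket : P →ₗ[R] P →ₗ[R] P :=
  LinearMap.mk₂ R
    (fun x y =>
      (map₂ h.brₗ (mul R A') x.1 y.1 - map₂ h.smₗ.flip h'.anₗ.flip x.1 y.2 +
          map₂ h.smₗ.flip h'.anₗ.flip y.1 x.2,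
        map₂ (mul R A) h'.brₗ x.2 y.2 + map₂ h.anₗ h'.smₗ x.1 y.2 -
          map₂ h.anₗ h'.smₗ y.1 x.2))
    (by intros; simp only [Prod.fst_add, Prod.snd_add, map_add, LinearMap.add_apply,
      Prod.mk_add_mk, Prod.mk.injEq]; constructor <;> abel)
    (by simp [smul_sub])
    (by intros; simp only [Prod.fst_add, Prod.snd_add, map_add, LinearMap.add_apply,
      Prod.mk_add_mk, Prod.mk.injEq]; constructor <;> abel)
    (by simp [smul_sub])

noncomputable def tensorAnchor : P →ₗ[R] A ⊗[R] A' →ₗ[R] A ⊗[R] A' :=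
  LinearMap.mk₂ R
    (fun x t => map₂ h.anₗ (mul R A') x.1 t + map₂ (mul R A) h'.anₗ x.2 t)
    (by intros; simp only [Prod.fst_add, Prod.snd_add, map_add, LinearMap.add_apply]; abel)
    (by simp) (by intros; simp only [map_add]; abel) (by simp)

@[simp] theorem tensorSmul_tmul_inl (a : A) (a' : A') (α : L) (c' : A') :
    h.tensorSmul h' (a ⊗ₜ a') (α ⊗ₜ c', 0) = (sm a α ⊗ₜ (a' * c'), 0) := by
  simp [tensorSmul]

@[simp] theorem tensorSmul_tmul_inr (a : A) (a' : A') (c : A) (α' : L') :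
    h.tensorSmul h' (a ⊗ₜ a') (0, c ⊗ₜ α') = (0, (a * c) ⊗ₜ sm' a' α') := by
  simp [tensorSmul]

@[simp] theorem tensorBracket_inl_inl (α : L) (a' : A') (β : L) (b' : A') :
    h.tensorBracket h' (α ⊗ₜ a', 0) (β ⊗ₜ b', 0) = (br α β ⊗ₜ (a' * b'), 0) := by
  simp [tensorBracket]

@[simp] theorem tensorBracket_inl_inr (α : L) (a' : A') (b : A) (β' : L') :
    h.tensorBracket h' (α ⊗ₜ a', 0) (0, b ⊗ₜ β') =
      (-(sm b α ⊗ₜ an' β' a'), an α b ⊗ₜ sm' a' β') := by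
  simp [tensorBracket]

@[simp] theorem tensorBracket_inr_inl (a : A) (α' : L') (β : L) (b' : A') :
    h.tensorBracket h' (0, a ⊗ₜ α') (β ⊗ₜ b', 0) =
      (sm a β ⊗ₜ an' α' b', -(an β a ⊗ₜ sm' b' α')) := by
  simp [tensorBracket]

@[simp] theorem tensorBracket_inr_inr (a : A) (α' : L') (b : A) (β' : L') :
    h.tensorBracket h' (0, a ⊗ₜ α') (0, b ⊗ₜ β') = (0, (a * b) ⊗ₜ br' α' β') := by
  simp [tensorBracket]

@[simp] theorem tensorAnchor_inl_tmul (α : L) (a' : A') (b : A) (b' : A') :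
    h.tensorAnchor h' (α ⊗ₜ a', 0) (b ⊗ₜ b') = an α b ⊗ₜ (a' * b') := by
  simp [tensorAnchor]

@[simp] theorem tensorAnchor_inr_tmul (a : A) (α' : L') (b : A) (b' : A') :
    h.tensorAnchor h' (0, a ⊗ₜ α') (b ⊗ₜ b') = (a * b) ⊗ₜ an' α' b' := by
  simp [tensorAnchor]

theorem tensorSmul_one (x : P) : h.tensorSmul h' 1 x = x := by
  rw [Algebra.TensorProduct.one_def]
  induction x using TensorProduct.prod_induction_on with
  | inl α a' => simp [h.sm_one]
  | inr a α' => simp [h'.sm_one]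
  | add x y hx hy => rw [map_add, hx, hy]

theorem tensorSmul_mul (s t : A ⊗[R] A') (x : P) :
    h.tensorSmul h' (s * t) x = h.tensorSmul h' s (h.tensorSmul h' t x) := by
  induction s using TensorProduct.induction_on with
  | zero => simp
  | add s₁ s₂ h₁ h₂ => simp only [add_mul, map_add, LinearMap.add_apply, h₁, h₂]
  | tmul a a' =>
    induction t using TensorProduct.induction_on with
    | zero => simp
    | add t₁ t₂ h₁ h₂ => simp only [mul_add, map_add, LinearMap.add_apply, h₁, h₂]
    | tmul b b' =>
      induction x using TensorProduct.prod_induction_on with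
      | add x y hx hy => simp only [map_add, hx, hy]
      | inl α c' => simp [h.sm_mul, mul_assoc]
      | inr c α' => simp [h'.sm_mul, mul_assoc]

theorem tensorBracket_skew (x y : P) : h.tensorBracket h' y x = -h.tensorBracket h' x y := by
  induction x using TensorProduct.prod_induction_on with
  | add x₁ x₂ h₁ h₂ => simp only [map_add, LinearMap.add_apply, h₁, h₂, neg_add]
  | inl α a' =>
    induction y using TensorProduct.prod_induction_on with
    | add y₁ y₂ h₁ h₂ => simp only [map_add, LinearMap.add_apply, h₁, h₂, neg_add]
    | inl β b' => simp [h.br_skew α β, neg_tmul, mul_comm]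
    | inr b β' => simp
  | inr a α' =>
    induction y using TensorProduct.prod_induction_on with
    | add y₁ y₂ h₁ h₂ => simp only [map_add, LinearMap.add_apply, h₁, h₂, neg_add]
    | inl β b' => simp
    | inr b β' => simp [h'.br_skew α' β', tmul_neg, mul_comm]

theorem tensorBracket_self (x : P) : h.tensorBracket h' x x = 0 := by
  induction x using TensorProduct.prod_induction_on with
  | inl α a' => simp [h.br_self]
  | inr a α' => simp [h'.br_self]
  | add x y hx hy =>
    simp only [map_add, LinearMap.add_apply, hx, hy, h.tensorBracket_skew h' x y]
    abel

theorem leibniz_tensorBracket_inl (α : L) (a' : A') (y z : P) :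
    h.tensorBracket h' (α ⊗ₜ a', 0) (h.tensorBracket h' y z) =
      h.tensorBracket h' (h.tensorBracket h' (α ⊗ₜ a', 0) y) z +
        h.tensorBracket h' y (h.tensorBracket h' (α ⊗ₜ a', 0) z) := by
  induction y using TensorProduct.prod_induction_on with
  | add y₁ y₂ h₁ h₂ => simp only [map_add, LinearMap.add_apply, h₁, h₂]; abel
  | inl β b' =>
    induction z using TensorProduct.prod_induction_on with
    | add z₁ z₂ h₁ h₂ => simp only [map_add, h₁, h₂]; abel
    | inl γ c' => simp [h.leibniz_br α β γ, add_tmul, mul_comm, mul_left_comm]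
    | inr c γ' =>
      simp [tensorBracket, h.br_sm, h.an_br, h'.an_mul, h'.an_sm, ← h'.sm_mul,
        add_tmul, sub_tmul, tmul_add, neg_tmul, mul_comm, h.br_skew α β, h.sm_neg]
      abel
  | inr b β' =>
    induction z using TensorProduct.prod_induction_on with
    | add z₁ z₂ h₁ h₂ => simp only [map_add, h₁, h₂]; abel
    | inl _ _ | inr _ _ =>
      simp [tensorBracket, h.br_sm, h'.br_sm, h.sm_br, h'.sm_br, h.an_br, h'.an_br, h.an_mul,
        h'.an_mul, h.an_sm, h'.an_sm, ← h.sm_mul, ← h'.sm_mul, add_tmul, tmul_add, sub_tmul,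
        tmul_sub, mul_comm, Prod.ext_iff]
      constructor <;> abel

theorem leibniz_tensorBracket_inr (a : A) (α' : L') (y z : P) :
    h.tensorBracket h' (0, a ⊗ₜ α') (h.tensorBracket h' y z) =
      h.tensorBracket h' (h.tensorBracket h' (0, a ⊗ₜ α') y) z +
        h.tensorBracket h' y (h.tensorBracket h' (0, a ⊗ₜ α') z) := by
  induction y using TensorProduct.prod_induction_on with
  | add y₁ y₂ h₁ h₂ => simp only [map_add, LinearMap.add_apply, h₁, h₂]; abel
  | inl β b' =>
    induction z using TensorProduct.prod_induction_on with
    | add z₁ z₂ h₁ h₂ => simp only [map_add, h₁, h₂]; abel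
    | inl _ _ | inr _ _ =>
      simp [tensorBracket, h.br_sm, h'.br_sm, h.sm_br, h'.sm_br, h.an_br, h'.an_br, h.an_mul,
        h'.an_mul, h.an_sm, h'.an_sm, ← h.sm_mul, ← h'.sm_mul, add_tmul, tmul_add, sub_tmul,
        tmul_sub, mul_comm, Prod.ext_iff]
      constructor <;> abel
  | inr b β' =>
    induction z using TensorProduct.prod_induction_on with
    | add z₁ z₂ h₁ h₂ => simp only [map_add, h₁, h₂]; abel
    | inl γ c' =>
      simp [tensorBracket, h'.br_sm, h'.an_br, h.an_mul, h.an_sm, ← h.sm_mul,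
        add_tmul, tmul_add, tmul_sub, tmul_neg, mul_comm, h'.br_skew α' β', h'.sm_neg]
      abel
    | inr c γ' => simp [h'.leibniz_br α' β' γ', tmul_add, mul_comm, mul_left_comm]

theorem leibniz_tensorBracket (x y z : P) :
    h.tensorBracket h' x (h.tensorBracket h' y z) =
      h.tensorBracket h' (h.tensorBracket h' x y) z +
        h.tensorBracket h' y (h.tensorBracket h' x z) := by
  induction x using TensorProduct.prod_induction_on with
  | inl α a' => exact h.leibniz_tensorBracket_inl h' α a' y z
  | inr a α' => exact h.leibniz_tensorBracket_inr h' a α' y z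
  | add x₁ x₂ h₁ h₂ => simp only [map_add, LinearMap.add_apply, h₁, h₂]; abel

theorem tensorAnchor_mul (x : P) (s t : A ⊗[R] A') :
    h.tensorAnchor h' x (s * t) = h.tensorAnchor h' x s * t + s * h.tensorAnchor h' x t := by
  induction x using TensorProduct.prod_induction_on with
  | add x y hx hy => simp only [map_add, LinearMap.add_apply, hx, hy, add_mul, mul_add]; abel
  | inl α a' | inr a α' =>
    induction s using TensorProduct.induction_on with
    | zero => simp
    | add s₁ s₂ h₁ h₂ => simp only [add_mul, map_add, h₁, h₂]; abel
    | tmul b b' =>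
      induction t using TensorProduct.induction_on with
      | zero => simp
      | add t₁ t₂ h₁ h₂ => simp only [mul_add, map_add, h₁, h₂]; abel
      | tmul c c' =>
        simp [h.an_mul, h'.an_mul, add_tmul, tmul_add, mul_comm, mul_left_comm]

theorem tensorAnchor_bracket (x y : P) (t : A ⊗[R] A') :
    h.tensorAnchor h' (h.tensorBracket h' x y) t =
      h.tensorAnchor h' x (h.tensorAnchor h' y t) -
        h.tensorAnchor h' y (h.tensorAnchor h' x t) := by
  induction x using TensorProduct.prod_induction_on with
  | add x₁ x₂ h₁ h₂ => simp only [map_add, LinearMap.add_apply, h₁, h₂]; abel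
  | inl α a' | inr a α' =>
    induction y using TensorProduct.prod_induction_on with
    | add y₁ y₂ h₁ h₂ => simp only [map_add, LinearMap.add_apply, h₁, h₂]; abel
    | inl β b' | inr b β' =>
      induction t using TensorProduct.induction_on with
      | zero => simp
      | add t₁ t₂ h₁ h₂ => simp only [map_add, h₁, h₂]; abel
      | tmul c c' =>
        simp [tensorBracket, tensorAnchor, h.an_br, h'.an_br, h.an_mul, h'.an_mul, h.an_sm,
          h'.an_sm, add_tmul, tmul_add, sub_tmul, tmul_sub, mul_comm, mul_left_comm] <;> abel

theorem tensorAnchor_smul (t : A ⊗[R] A') (x : P) (s : A ⊗[R] A') :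
    h.tensorAnchor h' (h.tensorSmul h' t x) s = t * h.tensorAnchor h' x s := by
  induction t using TensorProduct.induction_on with
  | zero => simp
  | add t₁ t₂ h₁ h₂ => simp only [map_add, LinearMap.add_apply, add_mul, h₁, h₂]
  | tmul b b' =>
    induction x using TensorProduct.prod_induction_on with
    | add x₁ x₂ h₁ h₂ => simp only [map_add, LinearMap.add_apply, mul_add, h₁, h₂]
    | inl α a' | inr a α' =>
      induction s using TensorProduct.induction_on with
      | zero => simp
      | add s₁ s₂ h₁ h₂ => simp only [map_add, mul_add, h₁, h₂]
      | tmul c c' => simp [h.an_sm, h'.an_sm, mul_comm, mul_left_comm]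

theorem tensorBracket_smul (x : P) (t : A ⊗[R] A') (y : P) :
    h.tensorBracket h' x (h.tensorSmul h' t y) =
      h.tensorSmul h' t (h.tensorBracket h' x y) +
        h.tensorSmul h' (h.tensorAnchor h' x t) y := by
  induction x using TensorProduct.prod_induction_on with
  | add x₁ x₂ h₁ h₂ => simp only [map_add, LinearMap.add_apply, h₁, h₂]; abel
  | inl α a' | inr a α' =>
    induction t using TensorProduct.induction_on with
    | zero => simp
    | add t₁ t₂ h₁ h₂ => simp only [map_add, LinearMap.add_apply, h₁, h₂]; abel
    | tmul b b' =>
      induction y using TensorProduct.prod_induction_on with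
      | add y₁ y₂ h₁ h₂ => simp only [map_add, h₁, h₂]; abel
      | inl γ c' | inr c γ' =>
        simp [tensorBracket, tensorSmul, tensorAnchor, h.br_sm, h'.br_sm, h.an_mul, h'.an_mul,
          h.an_sm, h'.an_sm, ← h.sm_mul, ← h'.sm_mul, add_tmul, tmul_add, mul_comm,
          mul_left_comm, Prod.ext_iff] <;> abel

theorem tensor :
    IsLR R (A ⊗[R] A') P (fun t x => h.tensorSmul h' t x) (fun x y => h.tensorBracket h' x y)
      (fun x t => h.tensorAnchor h' x t) :=
  ⟨fun t => (h.tensorSmul h' t).isLinear, h.tensorSmul_one h', h.tensorSmul_mul h',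
    fun s t x => by simp, fun r t x => by simp, fun x => (h.tensorBracket h' x).isLinear,
    fun y => ((h.tensorBracket h').flip y).isLinear, h.tensorBracket_self h',
    h.leibniz_tensorBracket h', fun x => (h.tensorAnchor h' x).isLinear,
    fun t => ((h.tensorAnchor h').flip t).isLinear, h.tensorAnchor_mul h',
    h.tensorAnchor_bracket h', h.tensorAnchor_smul h', h.tensorBracket_smul h'⟩

end IsLR

/-- for Lie-Rinehart algebras `(A,L)` and `(A',L')`, the
`R`-module `L ⊗ A' ⊕ A ⊗ L'` carries a natural `(R, A ⊗ A')`-Lie algebra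
structure, with componentwise module structure, bracket determined by the
brackets and anchors of `L` and `L'`, and anchor given on `A ⊗ A'` by
`(α⊗a')(b⊗b') = α(b) ⊗ a'b'` and `(a⊗α')(b⊗b') = ab ⊗ α'(b')`. -/
theorem stmt11 (R : Type u) [CommRing R] (A : Type v) [CommRing A] [Algebra R A]
    (A' : Type v) [CommRing A'] [Algebra R A']
    (L : Type v) [AddCommGroup L] [Module R L]
    (L' : Type v) [AddCommGroup L'] [Module R L']
    (sm : A → L → L) (br : L → L → L) (an : L → A → A)
    (sm' : A' → L' → L') (br' : L' → L' → L') (an' : L' → A' → A')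
    (h : IsLR R A L sm br an) (h' : IsLR R A' L' sm' br' an') :
    ∃ (SM : A ⊗[R] A' → (L ⊗[R] A') × (A ⊗[R] L') → (L ⊗[R] A') × (A ⊗[R] L'))
      (BR : (L ⊗[R] A') × (A ⊗[R] L') → (L ⊗[R] A') × (A ⊗[R] L') →
        (L ⊗[R] A') × (A ⊗[R] L'))
      (AN : (L ⊗[R] A') × (A ⊗[R] L') → A ⊗[R] A' → A ⊗[R] A'),
      IsLR R (A ⊗[R] A') ((L ⊗[R] A') × (A ⊗[R] L')) SM BR AN ∧
      -- componentwise module structure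
      (∀ (a c : A) (a' c' : A') (α : L) (α' : L'),
        SM (a ⊗ₜ[R] a') (α ⊗ₜ[R] c', c ⊗ₜ[R] α') =
          ((sm a α) ⊗ₜ[R] (a' * c'), (a * c) ⊗ₜ[R] (sm' a' α'))) ∧
      -- anchor
      (∀ (α : L) (a' : A') (b : A) (b' : A'),
        AN (α ⊗ₜ[R] a', 0) (b ⊗ₜ[R] b') = (an α b) ⊗ₜ[R] (a' * b')) ∧
      (∀ (a : A) (α' : L') (b : A) (b' : A'),
        AN (0, a ⊗ₜ[R] α') (b ⊗ₜ[R] b') = (a * b) ⊗ₜ[R] (an' α' b')) ∧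
      -- bracket determined by the brackets of L and L'
      (∀ (α β : L), BR (α ⊗ₜ[R] 1, 0) (β ⊗ₜ[R] 1, 0) = ((br α β) ⊗ₜ[R] 1, 0)) ∧
      (∀ (α' β' : L'),
        BR (0, 1 ⊗ₜ[R] α') (0, 1 ⊗ₜ[R] β') = (0, 1 ⊗ₜ[R] (br' α' β'))) ∧
      (∀ (α : L) (α' : L'), BR (α ⊗ₜ[R] 1, 0) (0, 1 ⊗ₜ[R] α') = 0) := by
  refine ⟨_, _, _, h.tensor h', ?_, ?_, ?_, ?_, ?_, ?_⟩
  · intro a c a' c' α α'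
    simp [IsLR.tensorSmul]
  · simp
  · simp
  · simp
  · simp
  · simp [h.an_one, h'.an_one]
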